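/- arXiv:1210.7503 — 6 statements merged into one kernel-verified Lean document; each statement's English description precedes it below -/
import Mathlib

section
/- If X_1,...,X_n are drawn sequentially without replacement from {x_1,...,x_n} with M = sum x_i and B = sum x_i^2, T_k = X_1^2+...+X_k^2, and S_k = X_1+...+X_k, then E[S_{k+1}^2 | F_k] = ((n-k-2)/(n-k)) S_k^2 + (2M/(n-k)) S_k - (1/(n-k)) T_k + B/(n-k). -/
/-!
Conditioning on `F_k` fixes the first `k` positions of the permutation, and averaging against any
`F_k`-measurable weight is invariant under swapping two of the remaining `n - k` positions. Hence
`X_{k+1}` may be replaced by the average of the values not yet drawn: its conditional mean is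
`(M - S_k) / (n - k)` and that of `X_{k+1}^2` is `(B - T_k) / (n - k)`. Expanding
`S_{k+1}^2 = S_k^2 + 2 S_k X_{k+1} + X_{k+1}^2` gives the formula.
-/

open MeasureTheory Finset

noncomputable section

instance permMS (n : ℕ) : MeasurableSpace (Equiv.Perm (Fin n)) := ⊤

instance permNE (n : ℕ) : Nonempty (Equiv.Perm (Fin n)) := ⟨1⟩

/-- uniform probability measure on the n! orderings: sampling without replacement. -/
def permMeasure (n : ℕ) : Measure (Equiv.Perm (Fin n)) :=
  (PMF.uniformOfFintype (Equiv.Perm (Fin n))).toMeasure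

/-- `X n x i σ` : the `(i+1)`-st sample (0-based `i`) drawn without replacement. -/
def X (n : ℕ) (x : Fin n → ℝ) (i : ℕ) (σ : Equiv.Perm (Fin n)) : ℝ :=
  if h : i < n then x (σ ⟨i, h⟩) else 0

/-- partial sum `S_k = X_1 + ⋯ + X_k`. -/
def S (n : ℕ) (x : Fin n → ℝ) (k : ℕ) (σ : Equiv.Perm (Fin n)) : ℝ :=
  ∑ i ∈ Finset.range k, X n x i σ

/-- partial sum of squares `T_k = X_1^2 + ⋯ + X_k^2`. -/
def T (n : ℕ) (x : Fin n → ℝ) (k : ℕ) (σ : Equiv.Perm (Fin n)) : ℝ :=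
  ∑ i ∈ Finset.range k, (X n x i σ) ^ 2

/-- `F_k = σ(X_1, ..., X_k)`. -/
def F (n : ℕ) (x : Fin n → ℝ) (k : ℕ) : MeasurableSpace (Equiv.Perm (Fin n)) :=
  MeasurableSpace.comap (fun σ => fun i : Fin k => X n x i σ) inferInstance

open Equiv

section SamplingWithoutReplacement

variable {α R : Type*} [Fintype α] [DecidableEq α] [CommRing R] {s : Finset α} {w : Perm α → R}

theorem sum_mul_apply_eq_of_notMem (hw : ∀ σ τ : Perm α, (∀ i ∈ s, σ i = τ i) → w σ = w τ)
    (v : α → R) {a b : α} (ha : a ∉ s) (hb : b ∉ s) :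
    ∑ σ, w σ * v (σ a) = ∑ σ, w σ * v (σ b) := by
  rw [← Equiv.sum_comp (Equiv.mulRight (swap a b))]
  refine sum_congr rfl fun σ _ => ?_
  have hfix : ∀ i ∈ s, (σ * swap a b) i = σ i := fun i hi =>
    congrArg σ (swap_apply_of_ne_of_ne (ne_of_mem_of_not_mem hi ha) (ne_of_mem_of_not_mem hi hb))
  simp [hw _ _ hfix]

theorem card_compl_nsmul_sum_mul_apply (hw : ∀ σ τ : Perm α, (∀ i ∈ s, σ i = τ i) → w σ = w τ)
    (v : α → R) {a : α} (ha : a ∉ s) :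
    #sᶜ • ∑ σ, w σ * v (σ a) = ∑ σ, w σ * (∑ j, v j - ∑ i ∈ s, v (σ i)) := by
  have hcompl : ∀ σ : Perm α, ∑ i ∈ sᶜ, v (σ i) = ∑ j, v j - ∑ i ∈ s, v (σ i) := fun σ => by
    rw [eq_sub_iff_add_eq, sum_compl_add_sum, Equiv.sum_comp σ v]
  calc #sᶜ • ∑ σ, w σ * v (σ a)
      = ∑ b ∈ sᶜ, ∑ σ, w σ * v (σ b) := by
        rw [← sum_const, sum_congr rfl fun b hb =>
          sum_mul_apply_eq_of_notMem hw v ha (mem_compl.1 hb)]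
    _ = ∑ σ, w σ * (∑ j, v j - ∑ i ∈ s, v (σ i)) := by
        simp only [sum_comm (s := sᶜ), ← mul_sum, hcompl]

end SamplingWithoutReplacement

theorem condExp_ae_eq_of_forall_sum_indicator_eq {Ω : Type*} [Fintype Ω] {m₀ : MeasurableSpace Ω}
    [MeasurableSingletonClass Ω] {μ : Measure Ω} [IsFiniteMeasure μ]
    (hμ : ∀ ω ω', μ {ω} = μ {ω'}) {m : MeasurableSpace Ω} (hm : m ≤ m₀) {f g : Ω → ℝ}
    (hg : StronglyMeasurable[m] g)
    (hfg : ∀ s, MeasurableSet[m] s → ∑ ω, s.indicator f ω = ∑ ω, s.indicator g ω) :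
    μ[f|m] =ᵐ[μ] g := by
  rcases isEmpty_or_nonempty Ω with _ | ⟨⟨ω₀⟩⟩
  · exact .of_forall isEmptyElim
  have hc : ∀ ω, μ.real {ω} = μ.real {ω₀} := fun ω => by
    rw [measureReal_def, measureReal_def, hμ ω ω₀]
  refine (ae_eq_condExp_of_forall_setIntegral_eq hm .of_finite
    (fun _ _ _ => Integrable.of_finite.integrableOn) (fun s hs _ => ?_)
    hg.aestronglyMeasurable).symm
  simp only [← integral_indicator (hm s hs), integral_fintype Integrable.of_finite, hc,
    ← smul_sum, hfg s hs]

section PartialSums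

variable {n : ℕ} (x : Fin n → ℝ)

theorem X_val (i : Fin n) (σ : Perm (Fin n)) : X n x i σ = x (σ i) :=
  dif_pos i.isLt

theorem sum_range_eq_sum_Iio {β : Type*} [AddCommMonoid β] (a : Fin n) (f : ℕ → β) :
    ∑ i ∈ range a, f i = ∑ i ∈ Iio a, f i := by
  rw [← Nat.Iio_eq_range, ← Fin.map_valEmbedding_Iio, sum_map]
  rfl

theorem S_eq_sum_Iio (a : Fin n) (σ : Perm (Fin n)) : S n x a σ = ∑ i ∈ Iio a, x (σ i) := by
  simp only [S, sum_range_eq_sum_Iio, X_val]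

theorem T_eq_sum_Iio (a : Fin n) (σ : Perm (Fin n)) : T n x a σ = ∑ i ∈ Iio a, x (σ i) ^ 2 := by
  simp only [T, sum_range_eq_sum_Iio, X_val]

theorem S_succ (a : Fin n) (σ : Perm (Fin n)) : S n x (a + 1) σ = S n x a σ + x (σ a) := by
  rw [S, sum_range_succ, X_val]
  rfl

theorem sum_mul_S_succ_sq {M B : ℝ} (hM : ∑ i, x i = M) (hB : ∑ i, x i ^ 2 = B) (a : Fin n)
    {w : Perm (Fin n) → ℝ} (hw : ∀ σ τ : Perm (Fin n), (∀ i ∈ Iio a, σ i = τ i) → w σ = w τ) :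
    ∑ σ, w σ * S n x (a + 1) σ ^ 2
      = ∑ σ, w σ * (((n : ℝ) - a - 2) / ((n : ℝ) - a) * S n x a σ ^ 2
          + 2 * M / ((n : ℝ) - a) * S n x a σ - 1 / ((n : ℝ) - a) * T n x a σ
          + B / ((n : ℝ) - a)) := by
  have hna : (n : ℝ) - a ≠ 0 := sub_ne_zero.2 (by exact_mod_cast a.isLt.ne')
  have hcard : ((#(Iio a)ᶜ : ℕ) : ℝ) = n - a := by
    rw [card_compl, Fintype.card_fin, Fin.card_Iio, Nat.cast_sub a.isLt.le]
  have hwS : ∀ σ τ : Perm (Fin n), (∀ i ∈ Iio a, σ i = τ i) →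
      w σ * S n x a σ = w τ * S n x a τ := fun σ τ h => by
    rw [hw σ τ h, S_eq_sum_Iio, S_eq_sum_Iio, sum_congr rfl fun i hi => congrArg x (h i hi)]
  have hlin := card_compl_nsmul_sum_mul_apply hwS x (notMem_Iio_self (b := a))
  have hsq := card_compl_nsmul_sum_mul_apply hw (fun j => x j ^ 2) (notMem_Iio_self (b := a))
  simp only [nsmul_eq_mul, hcard, hM, hB, ← S_eq_sum_Iio, ← T_eq_sum_Iio] at hlin hsq
  apply mul_left_cancel₀ hna
  calc ((n : ℝ) - a) * ∑ σ, w σ * S n x (a + 1) σ ^ 2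
      = (n - a) * ∑ σ, w σ * S n x a σ ^ 2 + 2 * ((n - a) * ∑ σ, w σ * S n x a σ * x (σ a))
          + (n - a) * ∑ σ, w σ * x (σ a) ^ 2 := by
        simp only [S_succ, mul_sum, ← sum_add_distrib]
        exact sum_congr rfl fun σ _ => by ring
    _ = ∑ σ, ((n - a) * (w σ * S n x a σ ^ 2) + 2 * (w σ * S n x a σ * (M - S n x a σ))
          + w σ * (B - T n x a σ)) := by
        rw [hlin, hsq]
        simp only [mul_sum, ← sum_add_distrib]
    _ = _ := by
        rw [mul_sum]
        refine sum_congr rfl fun σ _ => ?_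
        field_simp
        ring

end PartialSums

instance (n : ℕ) : MeasurableSingletonClass (Perm (Fin n)) := ⟨fun _ => trivial⟩

instance (n : ℕ) : IsProbabilityMeasure (permMeasure n) := PMF.toMeasure.isProbabilityMeasure _

theorem permMeasure_singleton_eq {n : ℕ} (σ τ : Perm (Fin n)) :
    permMeasure n {σ} = permMeasure n {τ} := by
  simp only [permMeasure, PMF.toMeasure_apply_singleton _ _ (measurableSet_singleton _),
    PMF.uniformOfFintype_apply]

section Filtration

variable {n : ℕ} (x : Fin n → ℝ) {k : ℕ}

theorem measurable_X_F {i : ℕ} (hi : i < k) : Measurable[F n x k] (X n x i) :=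
  (measurable_pi_apply (⟨i, hi⟩ : Fin k)).comp (comap_measurable fun σ (j : Fin k) => X n x j σ)

theorem measurable_S_F : Measurable[F n x k] (S n x k) :=
  Finset.measurable_sum (range k) fun _ hi => measurable_X_F x (mem_range.1 hi)

theorem measurable_T_F : Measurable[F n x k] (T n x k) :=
  Finset.measurable_sum (range k) fun _ hi => (measurable_X_F x (mem_range.1 hi)).pow_const 2

theorem mem_iff_of_measurableSet_F {s : Set (Perm (Fin n))} (hs : MeasurableSet[F n x k] s)
    {σ τ : Perm (Fin n)} (h : ∀ i : Fin n, (i : ℕ) < k → σ i = τ i) : σ ∈ s ↔ τ ∈ s := by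
  obtain ⟨t, -, rfl⟩ := hs
  have hX : (fun i : Fin k => X n x i σ) = fun i : Fin k => X n x i τ := funext fun i => by
    unfold X
    split_ifs with hin
    · rw [h ⟨i, hin⟩ i.isLt]
    · rfl
  exact Iff.of_eq (congrArg (· ∈ t) hX)

end Filtration

theorem statement1 (n : ℕ) (x : Fin n → ℝ) (M B : ℝ)
    (hM : ∑ i, x i = M) (hB : ∑ i, (x i) ^ 2 = B)
    (k : ℕ) (hk : k + 1 ≤ n) :
    (permMeasure n)[fun σ => (S n x (k + 1) σ) ^ 2|F n x k]
      =ᵐ[permMeasure n]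
        fun σ => ((n : ℝ) - k - 2) / ((n : ℝ) - k) * (S n x k σ) ^ 2
          + (2 * M / ((n : ℝ) - k)) * S n x k σ
          - (1 / ((n : ℝ) - k)) * T n x k σ + B / ((n : ℝ) - k) := by
  classical
  have hS := measurable_S_F x (k := k)
  have hT := measurable_T_F x (k := k)
  refine condExp_ae_eq_of_forall_sum_indicator_eq permMeasure_singleton_eq le_top
    (Measurable.stronglyMeasurable (by fun_prop)) fun s hs => ?_
  have hw : ∀ σ τ : Perm (Fin n), (∀ i ∈ Iio (⟨k, hk⟩ : Fin n), σ i = τ i) →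
      s.indicator 1 σ = s.indicator (1 : Perm (Fin n) → ℝ) τ := fun σ τ h => by
    simp only [Set.indicator_apply, Pi.one_apply,
      mem_iff_of_measurableSet_F x hs fun i hi => h i (mem_Iio.2 hi)]
  simpa only [Set.indicator_apply, Pi.one_apply, ite_mul, one_mul, zero_mul] using
    sum_mul_S_succ_sq x hM hB ⟨k, hk⟩ hw

end
end

section
/- If X_1,...,X_n are drawn sequentially without replacement from a set of reals with total sum 0 and sum of squares B, then the process M_k = [(n-1) S_k^2 - k (B - T_k)] / ((n-k)(n-k-1)), for 1 <= k <= n-2, is a martingale with respect to F_k = sigma(X_1,...,X_k), where S_k = X_1+...+X_k and T_k = X_1^2+...+X_k^2. -/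
open MeasureTheory Finset

noncomputable section

/-!
Conditionally on the first `k` draws, the `(k+1)`-st draw is uniform on the `n - k` values not
yet drawn: right multiplication by the transposition of positions `k` and `j ≥ k` fixes the first
`k` draws and exchanges draws `k` and `j`. Those remaining values sum to `-S_k` and their squares
to `B - T_k`, and since `M_{k+1}` is a quadratic polynomial in `X_{k+1}` with coefficients
depending on `S_k, T_k`, averaging it over the remaining values is an explicit computation, which
returns `M_k`.
-/

open Equiv

lemma setIntegral_permMeasure (n : ℕ) (s : Set (Perm (Fin n))) (f : Perm (Fin n) → ℝ) :
    ∫ σ in s, f σ ∂permMeasure n =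
      (Fintype.card (Perm (Fin n)) : ℝ)⁻¹ * ∑ σ, s.indicator f σ := by
  rw [← integral_indicator (by trivial), integral_fintype Integrable.of_finite, mul_sum]
  refine sum_congr rfl fun σ _ => ?_
  rw [measureReal_def, permMeasure, PMF.toMeasure_apply_singleton _ σ trivial,
    PMF.uniformOfFintype_apply, smul_eq_mul, ENNReal.toReal_inv, ENNReal.toReal_natCast]

/-- The value of `M_k` in terms of `S_k = s` and `T_k = t`. -/
def martFn (n : ℕ) (B : ℝ) (k : ℕ) (s t : ℝ) : ℝ :=
  ((n : ℝ) - 1) * s ^ 2 / (((n : ℝ) - k) * ((n : ℝ) - k - 1))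
    - k * (B - t) / (((n : ℝ) - k) * ((n : ℝ) - k - 1))

lemma sum_martFn_succ {ι : Type*} {n k : ℕ} (hkn : k + 3 ≤ n) {B s t : ℝ} (J : Finset ι)
    (y : ι → ℝ) (hJ : (J.card : ℝ) = n - k) (hy : ∑ j ∈ J, y j = -s)
    (hy2 : ∑ j ∈ J, y j ^ 2 = B - t) :
    ∑ j ∈ J, martFn n B (k + 1) (s + y j) (t + y j ^ 2) = (n - k) * martFn n B k s t := by
  have hk : (k : ℝ) + 3 ≤ n := by exact_mod_cast hkn
  have h0 : (n : ℝ) - k ≠ 0 := by linarith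
  have h1 : (n : ℝ) - k - 1 ≠ 0 := by linarith
  have h2 : (n : ℝ) - k - 2 ≠ 0 := by linarith
  have hD : ((n : ℝ) - (k + 1)) * ((n : ℝ) - (k + 1) - 1) = (n - k - 1) * (n - k - 2) := by ring
  calc ∑ j ∈ J, martFn n B (k + 1) (s + y j) (t + y j ^ 2)
      = ∑ j ∈ J, (((n - 1) * s ^ 2 - (k + 1) * (B - t)) + 2 * (n - 1) * s * y j
          + (n + k) * y j ^ 2) / ((n - k - 1) * (n - k - 2)) := by
        refine sum_congr rfl fun j _ => ?_
        simp only [martFn]; push_cast; rw [hD]; ring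
    _ = ((n - k) * ((n - 1) * s ^ 2 - (k + 1) * (B - t)) + 2 * (n - 1) * s * (-s)
          + (n + k) * (B - t)) / ((n - k - 1) * (n - k - 2)) := by
        rw [← sum_div, sum_add_distrib, sum_add_distrib, sum_const, nsmul_eq_mul, hJ,
          ← mul_sum, ← mul_sum, hy, hy2]
    _ = (n - k) * martFn n B k s t := by
        simp only [martFn]; field_simp; ring

lemma S_self (n : ℕ) (x : Fin n → ℝ) (σ : Perm (Fin n)) : S n x n σ = ∑ i, x i := by
  rw [S, ← Fin.sum_univ_eq_sum_range (fun i => X n x i σ)]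
  simpa [X] using Equiv.sum_comp σ x

lemma T_self (n : ℕ) (x : Fin n → ℝ) (σ : Perm (Fin n)) : T n x n σ = ∑ i, x i ^ 2 := by
  rw [T, ← Fin.sum_univ_eq_sum_range (fun i => X n x i σ ^ 2)]
  simpa [X] using Equiv.sum_comp σ (fun i => x i ^ 2)

section Exchangeability

variable {n : ℕ} (x : Fin n → ℝ) {k : ℕ} {τ : Perm (Fin n)}

lemma X_mul_of_fixes (hτ : ∀ i : Fin n, (i : ℕ) < k → τ i = i) (σ : Perm (Fin n)) {i : ℕ}
    (hi : i < k) : X n x i (σ * τ) = X n x i σ := by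
  by_cases hin : i < n
  · simp [X, hin, hτ ⟨i, hin⟩ hi]
  · simp [X, hin]

lemma S_mul_of_fixes (hτ : ∀ i : Fin n, (i : ℕ) < k → τ i = i) (σ : Perm (Fin n)) :
    S n x k (σ * τ) = S n x k σ :=
  sum_congr rfl fun _ hi => X_mul_of_fixes x hτ σ (mem_range.mp hi)

lemma T_mul_of_fixes (hτ : ∀ i : Fin n, (i : ℕ) < k → τ i = i) (σ : Perm (Fin n)) :
    T n x k (σ * τ) = T n x k σ :=
  sum_congr rfl fun _ hi => by rw [X_mul_of_fixes x hτ σ (mem_range.mp hi)]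

lemma mul_mem_iff_of_measurableSet_F (hτ : ∀ i : Fin n, (i : ℕ) < k → τ i = i)
    {s : Set (Perm (Fin n))} (hs : MeasurableSet[F n x k] s) (σ : Perm (Fin n)) :
    σ * τ ∈ s ↔ σ ∈ s := by
  obtain ⟨t, -, rfl⟩ := hs
  simp only [Set.mem_preimage]
  rw [funext fun i : Fin k => X_mul_of_fixes x hτ σ i.isLt]

/-- Given the first `k` draws, every later draw has the same conditional law. -/
lemma sum_X_eq_sum_X_of_le (Φ : Perm (Fin n) → ℝ → ℝ)
    (hΦ : ∀ σ τ : Perm (Fin n), (∀ i : Fin n, (i : ℕ) < k → τ i = i) → Φ (σ * τ) = Φ σ)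
    {j : ℕ} (hkj : k ≤ j) (hj : j < n) :
    ∑ σ, Φ σ (X n x j σ) = ∑ σ, Φ σ (X n x k σ) := by
  have hk : k < n := hkj.trans_lt hj
  set τ := swap (⟨k, hk⟩ : Fin n) ⟨j, hj⟩
  have hτ : ∀ i : Fin n, (i : ℕ) < k → τ i = i := fun i hi =>
    swap_apply_of_ne_of_ne (Fin.ne_of_val_ne hi.ne) (Fin.ne_of_val_ne (show (i : ℕ) ≠ j by omega))
  rw [← Equiv.sum_comp (Equiv.mulRight τ)]
  refine sum_congr rfl fun σ _ => ?_
  simp [hΦ σ τ hτ, X, hj, hk, τ]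

end Exchangeability

lemma sum_Ico_martFn_succ {n k : ℕ} (hkn : k + 3 ≤ n) {x : Fin n → ℝ} {B : ℝ}
    (hx : ∑ i, x i = 0) (hB : ∑ i, x i ^ 2 = B) (σ : Perm (Fin n)) :
    ∑ j ∈ Ico k n, martFn n B (k + 1) (S n x k σ + X n x j σ) (T n x k σ + X n x j σ ^ 2) =
      (n - k) * martFn n B k (S n x k σ) (T n x k σ) := by
  have hkn' : k ≤ n := by omega
  have hS := S_self n x σ
  have hT := T_self n x σ
  rw [S, ← sum_range_add_sum_Ico _ hkn', hx] at hS
  rw [T, ← sum_range_add_sum_Ico _ hkn', hB] at hT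
  refine sum_martFn_succ hkn _ _ ?_ ?_ ?_
  · simp [Nat.cast_sub hkn']
  · rw [S]; linarith
  · rw [T]; linarith

lemma sum_indicator_martFn_succ {n k : ℕ} (hkn : k + 3 ≤ n) {x : Fin n → ℝ} {B : ℝ}
    (hx : ∑ i, x i = 0) (hB : ∑ i, x i ^ 2 = B) {s : Set (Perm (Fin n))}
    (hs : MeasurableSet[F n x k] s) :
    ∑ σ, s.indicator (fun σ => martFn n B (k + 1) (S n x (k + 1) σ) (T n x (k + 1) σ)) σ =
      ∑ σ, s.indicator (fun σ => martFn n B k (S n x k σ) (T n x k σ)) σ := by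
  classical
  have hkn' : k ≤ n := by omega
  set Φ : Perm (Fin n) → ℝ → ℝ := fun σ y =>
    s.indicator (fun σ => martFn n B (k + 1) (S n x k σ + y) (T n x k σ + y ^ 2)) σ
  have hΦ : ∀ σ τ : Perm (Fin n), (∀ i : Fin n, (i : ℕ) < k → τ i = i) → Φ (σ * τ) = Φ σ := by
    intro σ τ hτ
    funext y
    simp only [Φ, Set.indicator_apply, mul_mem_iff_of_measurableSet_F x hτ hs,
      S_mul_of_fixes x hτ, T_mul_of_fixes x hτ]
  have hsucc : ∀ σ, s.indicator (fun σ => martFn n B (k + 1) (S n x (k + 1) σ)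
      (T n x (k + 1) σ)) σ = Φ σ (X n x k σ) := fun σ => by
    simp only [Φ, S, T, sum_range_succ, Set.indicator_apply]
  have hrow : ∀ σ, ∑ j ∈ Ico k n, Φ σ (X n x j σ) =
      (n - k) * s.indicator (fun σ => martFn n B k (S n x k σ) (T n x k σ)) σ := by
    intro σ
    by_cases hσ : σ ∈ s
    · simp only [Φ, Set.indicator_of_mem hσ, sum_Ico_martFn_succ hkn hx hB]
    · simp [Φ, hσ]
  have hnk : (n : ℝ) - k ≠ 0 := sub_ne_zero.mpr (by exact_mod_cast (by omega : n ≠ k))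
  refine mul_left_cancel₀ hnk ?_
  calc (n - k : ℝ) * ∑ σ, s.indicator
        (fun σ => martFn n B (k + 1) (S n x (k + 1) σ) (T n x (k + 1) σ)) σ
      = ∑ j ∈ Ico k n, ∑ σ, Φ σ (X n x j σ) := by
        rw [sum_congr rfl fun j hj => sum_X_eq_sum_X_of_le x Φ hΦ (mem_Ico.mp hj).1
          (mem_Ico.mp hj).2, sum_const, Nat.card_Ico, nsmul_eq_mul,
          Nat.cast_sub hkn']
        simp only [hsucc]
    _ = ∑ σ, (n - k : ℝ) * s.indicator (fun σ => martFn n B k (S n x k σ) (T n x k σ)) σ := by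
        rw [sum_comm]
        exact sum_congr rfl fun σ _ => hrow σ
    _ = _ := (mul_sum _ _ _).symm

lemma stronglyMeasurable_martFn (n : ℕ) (x : Fin n → ℝ) (B : ℝ) (k : ℕ) :
    StronglyMeasurable[F n x k] (fun σ => martFn n B k (S n x k σ) (T n x k σ)) := by
  have hcont : Continuous fun v : Fin k → ℝ => martFn n B k (∑ i, v i) (∑ i, v i ^ 2) := by
    unfold martFn; fun_prop
  convert (hcont.measurable.comp
    (comap_measurable fun σ (i : Fin k) => X n x i σ)).stronglyMeasurable using 1
  · rfl
  funext σ
  simp only [Function.comp_apply, S, T, Fin.sum_univ_eq_sum_range (fun i => X n x i σ),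
    Fin.sum_univ_eq_sum_range (fun i => X n x i σ ^ 2)]

theorem statement3 (n : ℕ) (x : Fin n → ℝ) (B : ℝ)
    (hx : ∑ i, x i = 0) (hB : ∑ i, (x i) ^ 2 = B)
    (Mart : ℕ → Equiv.Perm (Fin n) → ℝ)
    (hMart : ∀ k σ, Mart k σ =
      ((n : ℝ) - 1) * (S n x k σ) ^ 2 / (((n : ℝ) - k) * ((n : ℝ) - k - 1))
        - k * (B - T n x k σ) / (((n : ℝ) - k) * ((n : ℝ) - k - 1))) :
    (∀ k, 1 ≤ k → k ≤ n - 2 → StronglyMeasurable[F n x k] (Mart k)) ∧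
    (∀ k, 1 ≤ k → k + 1 ≤ n - 2 →
      (permMeasure n)[Mart (k + 1)|F n x k] =ᵐ[permMeasure n] Mart k) := by
  obtain rfl : Mart = fun k σ => martFn n B k (S n x k σ) (T n x k σ) :=
    funext fun k => funext (hMart k)
  refine ⟨fun k _ _ => stronglyMeasurable_martFn n x B k, fun k _ hk => ?_⟩
  refine (ae_eq_condExp_of_forall_setIntegral_eq le_top Integrable.of_finite
    (fun _ _ _ => Integrable.of_finite.integrableOn) (fun s hs _ => ?_)
    (stronglyMeasurable_martFn n x B k).aestronglyMeasurable).symm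
  rw [setIntegral_permMeasure, setIntegral_permMeasure,
    sum_indicator_martFn_succ (by omega) hx hB hs]

end
end

section
/- If X_1,X_2,X_3,X_4 are the first four samples drawn without replacement from reals x_1,...,x_n (n >= 4) summing to 0, then E[X_1 X_2 X_3 X_4] = (3B^2 - 6Q)/(n(n-1)(n-2)(n-3)), where B = sum x_i^2 and Q = sum x_i^4. -/
open MeasureTheory Finset

noncomputable section

/-!
Average over all `n!` orderings. Splitting a permutation of `Fin (m + 1)` according to the image
of `0` turns the sum of `x (σ 0) * ⋯ * x (σ (k - 1))` into `∑ p, x p` times the analogous sum of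
length `k - 1` for the remaining `m` values, whose power sums are those of `x` minus the powers of
`x p`. Iterating from `k = 1` to `4` gives `m!` times a polynomial in the power sums, and when
`∑ x i = 0` only `3 B ^ 2 - 6 Q` survives.
-/

open Equiv Nat

lemma sum_comp_swap_zero_succ {M : Type*} [AddCommGroup M] {m : ℕ} (f : Fin (m + 1) → M)
    (p : Fin (m + 1)) : ∑ j : Fin m, f (swap 0 p j.succ) = ∑ i, f i - f p := by
  rw [← Equiv.sum_comp (swap 0 p) f, Fin.sum_univ_succ, swap_apply_left, add_sub_cancel_left]

lemma sum_perm_mul_tail {m : ℕ} (x : Fin (m + 1) → ℝ) (G : (Fin m → ℝ) → ℝ) :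
    ∑ σ : Perm (Fin (m + 1)), x (σ 0) * G (fun j => x (σ j.succ))
      = ∑ p, x p * ∑ e : Perm (Fin m), G (fun j => x (swap 0 p (e j).succ)) := by
  rw [← Equiv.sum_comp Perm.decomposeFin.symm, Fintype.sum_prod_type]
  simp only [Perm.decomposeFin_symm_apply_zero, Perm.decomposeFin_symm_apply_succ, mul_sum]

lemma sum_perm_apply_zero (m : ℕ) (x : Fin (m + 1) → ℝ) :
    ∑ σ : Perm (Fin (m + 1)), x (σ 0) = m ! * ∑ i, x i := by
  have tail := sum_perm_mul_tail x (fun _ => 1)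
  simp only [mul_one, sum_const, Finset.card_univ, Fintype.card_perm, Fintype.card_fin,
    nsmul_eq_mul] at tail
  rw [tail, ← sum_mul, mul_comm]

lemma sum_perm_prod_two (m : ℕ) (x : Fin (m + 2) → ℝ) :
    ∑ σ : Perm (Fin (m + 2)), x (σ 0) * x (σ 1)
      = m ! * ((∑ i, x i) ^ 2 - ∑ i, x i ^ 2) := by
  refine (sum_perm_mul_tail x (fun y => y 0)).trans ?_
  simp only [fun p => sum_perm_apply_zero m (fun i => x (swap 0 p i.succ)),
    sum_comp_swap_zero_succ x]
  -- expanded in powers of `x p`, the sum over `p` splits into power sums of `x`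
  ring_nf
  simp only [sum_sub_distrib, ← sum_mul]
  ring

lemma sum_perm_prod_three (m : ℕ) (x : Fin (m + 3) → ℝ) :
    ∑ σ : Perm (Fin (m + 3)), x (σ 0) * x (σ 1) * x (σ 2)
      = m ! * ((∑ i, x i) ^ 3 - 3 * (∑ i, x i) * (∑ i, x i ^ 2) + 2 * ∑ i, x i ^ 3) := by
  calc ∑ σ : Perm (Fin (m + 3)), x (σ 0) * x (σ 1) * x (σ 2)
      = ∑ σ : Perm (Fin (m + 3)), x (σ 0) * (x (σ 1) * x (σ 2)) := by simp only [mul_assoc]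
    _ = _ := sum_perm_mul_tail x (fun y => y 0 * y 1)
    _ = _ := by
      simp only [fun p => sum_perm_prod_two m (fun i => x (swap 0 p i.succ)),
        sum_comp_swap_zero_succ x, sum_comp_swap_zero_succ (fun i => x i ^ 2)]
      ring_nf
      simp only [sum_add_distrib, sum_sub_distrib, ← sum_mul]
      ring

lemma sum_perm_prod_four (m : ℕ) (x : Fin (m + 4) → ℝ) :
    ∑ σ : Perm (Fin (m + 4)), x (σ 0) * x (σ 1) * x (σ 2) * x (σ 3)
      = m ! * ((∑ i, x i) ^ 4 - 6 * (∑ i, x i) ^ 2 * (∑ i, x i ^ 2) + 3 * (∑ i, x i ^ 2) ^ 2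
          + 8 * (∑ i, x i) * (∑ i, x i ^ 3) - 6 * ∑ i, x i ^ 4) := by
  calc ∑ σ : Perm (Fin (m + 4)), x (σ 0) * x (σ 1) * x (σ 2) * x (σ 3)
      = ∑ σ : Perm (Fin (m + 4)), x (σ 0) * (x (σ 1) * x (σ 2) * x (σ 3)) := by
        simp only [mul_assoc]
    _ = _ := sum_perm_mul_tail x (fun y => y 0 * y 1 * y 2)
    _ = _ := by
      simp only [fun p => sum_perm_prod_three m (fun i => x (swap 0 p i.succ)),
        sum_comp_swap_zero_succ x, sum_comp_swap_zero_succ (fun i => x i ^ 2),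
        sum_comp_swap_zero_succ (fun i => x i ^ 3)]
      ring_nf
      simp only [sum_add_distrib, sum_sub_distrib, sum_neg_distrib, ← sum_mul]
      ring

lemma integral_permMeasure (n : ℕ) (f : Perm (Fin n) → ℝ) :
    ∫ σ, f σ ∂permMeasure n = (n ! : ℝ)⁻¹ * ∑ σ, f σ := by
  have : MeasurableSingletonClass (Perm (Fin n)) := ⟨fun _ => trivial⟩
  simp only [permMeasure, PMF.integral_eq_sum, PMF.uniformOfFintype_apply, smul_eq_mul,
    ENNReal.toReal_inv, ENNReal.toReal_natCast, Fintype.card_perm, Fintype.card_fin, mul_sum]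

theorem statement8 (n : ℕ) (hn : 4 ≤ n) (x : Fin n → ℝ) (B Q : ℝ)
    (hx : ∑ i, x i = 0) (hB : ∑ i, (x i) ^ 2 = B) (hQ : ∑ i, (x i) ^ 4 = Q) :
    ∫ σ, X n x 0 σ * X n x 1 σ * X n x 2 σ * X n x 3 σ ∂(permMeasure n)
      = (3 * B ^ 2 - 6 * Q) / ((n : ℝ) * ((n : ℝ) - 1) * ((n : ℝ) - 2) * ((n : ℝ) - 3)) := by
  obtain ⟨m, rfl⟩ := Nat.exists_eq_add_of_le' hn
  have hX : ∀ σ, X (m + 4) x 0 σ * X (m + 4) x 1 σ * X (m + 4) x 2 σ * X (m + 4) x 3 σ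
      = x (σ 0) * x (σ 1) * x (σ 2) * x (σ 3) := fun σ => rfl
  have hden : ((m + 4 : ℕ) : ℝ) * ((m + 4 : ℕ) - 1) * ((m + 4 : ℕ) - 2) * ((m + 4 : ℕ) - 3)
      = (m + 4) * (m + 3) * (m + 2) * (m + 1) := by push_cast; ring
  rw [integral_permMeasure, sum_congr rfl fun σ _ => hX σ, sum_perm_prod_four, hx, hB, hQ, hden]
  push_cast [factorial_succ]
  field_simp
  ring

end
end

section
/- For real numbers x_1,...,x_n with x_1+...+x_n = 0, the average over all n! permutations sigma of max_{1<=k<=n} ( (1/k) sum_{i=1}^k x_{sigma(i)} )^2 is at most (4/n) sum_{i=1}^n x_i^2. -/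
/-!
Read `σ` as drawing the entries of `x` without replacement. Going backwards, `k = n, n - 1, …, 1`,
the sample means of the first `k` draws form a martingale: conditionally on the draws after
position `m`, every one of the first `m` draws has the same law, so the mean of the first `m` is
the conditional expectation of the first draw. Doob's L² maximal inequality then bounds the mean
square of the running maximum `C` of their absolute values by `4 E[x(σ 0)²] = (4/n) ∑ xᵢ²`.
Elementarily: `C² ≤ 2 ∑ |mean| ΔC` pathwise (`C` starts at the full mean `0`); averaging over `σ`
replaces `|mean of the first m|` by `|x(σ 0)|` since `ΔC` only depends on the later draws; and
`E[C²] ≤ 2 E[|x(σ 0)| C]` gives `E[C²] ≤ 4 E[x(σ 0)²]` by Cauchy–Schwarz.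
-/

open MeasureTheory Finset

noncomputable section

open Equiv
open scoped Nat

section SwapInvariance

variable {α M : Type*} [Fintype α] [DecidableEq α] [AddCommMonoid M]

theorem Equiv.Perm.sum_apply_eq_of_mul_swap_invariant (G : Perm α → α → M) {p q : α}
    (hG : ∀ σ, G (σ * swap p q) = G σ) :
    ∑ σ : Perm α, G σ (σ p) = ∑ σ : Perm α, G σ (σ q) :=
  Fintype.sum_equiv (Equiv.mulRight (swap p q)) _ _ fun σ => by simp [hG]

theorem Equiv.Perm.card_smul_sum_apply (f : α → M) (p : α) :
    Fintype.card α • ∑ σ : Perm α, f (σ p) = (Fintype.card α)! • ∑ a, f a := by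
  have hp : ∀ q, ∑ σ : Perm α, f (σ q) = ∑ σ : Perm α, f (σ p) := fun q =>
    (Perm.sum_apply_eq_of_mul_swap_invariant (fun _ => f) fun _ => rfl).symm
  calc Fintype.card α • ∑ σ : Perm α, f (σ p)
      = ∑ q, ∑ σ : Perm α, f (σ q) := by simp only [hp, sum_const, Finset.card_univ]
    _ = ∑ σ : Perm α, ∑ q, f (σ q) := sum_comm
    _ = (Fintype.card α)! • ∑ a, f a := by
      simp only [Equiv.sum_comp, sum_const, Finset.card_univ, Fintype.card_perm]

end SwapInvariance

section OrderedRing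

variable {R : Type*} [CommRing R] [LinearOrder R] [IsStrictOrderedRing R]

theorem max_sq_sub_sq_le (a b : R) : max b a ^ 2 - b ^ 2 ≤ 2 * a * (max b a - b) := by
  rcases le_total a b with h | h
  · simp [max_eq_left h]
  · rw [max_eq_right h]; nlinarith [sq_nonneg (a - b)]

theorem partialSups_sq_le (u : ℕ → R) (N : ℕ) :
    partialSups u N ^ 2 ≤
      u 0 ^ 2 + 2 * ∑ j ∈ range N, u (j + 1) * (partialSups u (j + 1) - partialSups u j) := by
  induction N with
  | zero => simp
  | succ N ih =>
    have hsucc : partialSups u (N + 1) = max (partialSups u N) (u (N + 1)) :=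
      partialSups_succ u N
    have := max_sq_sub_sq_le (u (N + 1)) (partialSups u N)
    rw [sum_range_succ, ← hsucc] at *
    linarith

theorem sum_sq_le_four_mul_of_sum_sq_le_two_mul_sum_mul {ι : Type*} (s : Finset ι)
    (f g : ι → R) (h : ∑ i ∈ s, g i ^ 2 ≤ 2 * ∑ i ∈ s, f i * g i) :
    ∑ i ∈ s, g i ^ 2 ≤ 4 * ∑ i ∈ s, f i ^ 2 := by
  have hCS := sum_mul_sq_le_sq_mul_sq s f g
  have hf : 0 ≤ ∑ i ∈ s, f i ^ 2 := sum_nonneg fun i _ => sq_nonneg (f i)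
  have hg : 0 ≤ ∑ i ∈ s, g i ^ 2 := sum_nonneg fun i _ => sq_nonneg (g i)
  nlinarith

end OrderedRing

section PrefixMeans

variable {n : ℕ} (x : Fin n → ℝ)

def prefixMean (σ : Perm (Fin n)) (k : ℕ) : ℝ :=
  (1 / (k : ℝ)) * ∑ i ∈ univ.filter fun i : Fin n => (i : ℕ) < k, x (σ i)

theorem prefixMean_mul_swap (σ : Perm (Fin n)) {p q : Fin n} {k : ℕ} (hp : (p : ℕ) < k)
    (hq : (q : ℕ) < k) : prefixMean x (σ * swap p q) k = prefixMean x σ k := by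
  unfold prefixMean
  congr 1
  refine (swap p q).sum_comp _ (fun i => x (σ i)) fun a ha => ?_
  have hpq : a = p ∨ a = q := by
    by_contra! h
    exact ha (swap_apply_of_ne_of_ne h.1 h.2)
  simp only [coe_filter, mem_univ, true_and]
  rcases hpq with rfl | rfl <;> assumption

theorem prefixMean_self (hx : ∑ i, x i = 0) (σ : Perm (Fin n)) : prefixMean x σ n = 0 := by
  simp [prefixMean, Equiv.sum_comp σ x, hx]

theorem sum_abs_prefixMean_mul_le (g : Perm (Fin n) → ℝ) (hg : ∀ σ, 0 ≤ g σ) {m : ℕ}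
    (hmn : m ≤ n) {p : Fin n} (hpm : (p : ℕ) < m)
    (hinv : ∀ σ (q : Fin n), (q : ℕ) < m → g (σ * swap p q) = g σ) :
    ∑ σ, |prefixMean x σ m| * g σ ≤ ∑ σ, |x (σ p)| * g σ := by
  -- Multiplying by the sign of `prefixMean x σ m`, which is also invariant under swapping
  -- positions below `m`, each of the first `m` entries may be replaced by the one at `p`.
  set s := univ.filter fun i : Fin n => (i : ℕ) < m
  have hs : (#s : ℝ) = m := by simp [s, Fin.card_filter_val_lt, hmn]
  have hm : (m : ℝ) ≠ 0 := Nat.cast_ne_zero.mpr (by omega)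
  set h : Perm (Fin n) → ℝ := fun σ => SignType.sign (prefixMean x σ m) * g σ
  have hswap : ∀ q ∈ s, ∑ σ, h σ * x (σ q) = ∑ σ, h σ * x (σ p) := fun q hq =>
    (Perm.sum_apply_eq_of_mul_swap_invariant (fun σ a => h σ * x a) fun σ => by
      simp only [mem_filter, mem_univ, true_and, s] at hq
      simp only [h, hinv σ q hq, prefixMean_mul_swap x σ hpm hq]).symm
  calc ∑ σ, |prefixMean x σ m| * g σ
      = ∑ σ, (1 / (m : ℝ)) * ∑ q ∈ s, h σ * x (σ q) := by
        refine sum_congr rfl fun σ _ => ?_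
        rw [← mul_sum, ← sign_mul_self]
        simp only [h, prefixMean, s]
        ring
    _ = ∑ σ, h σ * x (σ p) := by
        rw [← mul_sum, sum_comm, sum_congr rfl hswap, sum_const, nsmul_eq_mul, hs]
        field_simp
    _ ≤ ∑ σ, |x (σ p)| * g σ := by
        refine sum_le_sum fun σ _ => ?_
        have := hg σ
        have := neg_abs_le (x (σ p))
        have := le_abs_self (x (σ p))
        rcases lt_trichotomy (prefixMean x σ m) 0 with hA | hA | hA <;>
          simp only [h, sign_neg, sign_zero, sign_pos, hA, SignType.coe_neg, SignType.coe_one,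
            SignType.coe_zero] <;> nlinarith

/-- `tailMax x σ j = max_{n - j ≤ k ≤ n} |prefixMean x σ k|`: the running maximum of the reverse
martingale `k ↦ prefixMean x σ k`, indexed backwards from `k = n`. -/
def tailMax (σ : Perm (Fin n)) (j : ℕ) : ℝ :=
  partialSups (fun i => |prefixMean x σ (n - i)|) j

theorem tailMax_mul_swap (σ : Perm (Fin n)) {p q : Fin n} {j : ℕ} (hp : (p : ℕ) + j < n)
    (hq : (q : ℕ) + j < n) : tailMax x (σ * swap p q) j = tailMax x σ j := by
  simp only [tailMax, partialSups_apply]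
  refine sup'_congr nonempty_Iic rfl fun i hi => ?_
  rw [mem_Iic] at hi
  rw [prefixMean_mul_swap x σ (by omega) (by omega)]

theorem tailMax_zero (hx : ∑ i, x i = 0) (σ : Perm (Fin n)) : tailMax x σ 0 = 0 := by
  simp [tailMax, prefixMean_self x hx]

theorem sq_prefixMean_le_sq_tailMax (σ : Perm (Fin n)) {k : ℕ} (hk : k ∈ Icc 1 n) :
    prefixMean x σ k ^ 2 ≤ tailMax x σ (n - 1) ^ 2 := by
  rw [mem_Icc] at hk
  rw [← sq_abs]
  have h := le_partialSups_of_le (fun i => |prefixMean x σ (n - i)|) (show n - k ≤ n - 1 by omega)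
  simp only [Nat.sub_sub_self hk.2] at h
  exact pow_le_pow_left₀ (abs_nonneg _) h 2

theorem sum_sq_tailMax_le (hx : ∑ i, x i = 0) (hn : 0 < n) :
    ∑ σ, tailMax x σ (n - 1) ^ 2 ≤ 2 * ∑ σ, |x (σ ⟨0, hn⟩)| * tailMax x σ (n - 1) := by
  set p : Fin n := ⟨0, hn⟩
  have hp0 : (p : ℕ) = 0 := rfl
  set D : ℕ → Perm (Fin n) → ℝ := fun j σ => tailMax x σ (j + 1) - tailMax x σ j
  have hpath : ∀ σ, tailMax x σ (n - 1) ^ 2 ≤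
      2 * ∑ j ∈ range (n - 1), |prefixMean x σ (n - (j + 1))| * D j σ := fun σ => by
    have h := partialSups_sq_le (fun i => |prefixMean x σ (n - i)|) (n - 1)
    rwa [Nat.sub_zero, prefixMean_self x hx, abs_zero, zero_pow two_ne_zero, zero_add] at h
  have hstep : ∀ j ∈ range (n - 1),
      ∑ σ, |prefixMean x σ (n - (j + 1))| * D j σ ≤ ∑ σ, |x (σ p)| * D j σ := fun j hj => by
    rw [mem_range] at hj
    refine sum_abs_prefixMean_mul_le x (D j)
      (fun σ => sub_nonneg.2 (partialSups_monotone _ j.le_succ)) (Nat.sub_le _ _)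
      (show (p : ℕ) < n - (j + 1) by omega) fun σ q hq => ?_
    simp only [D]
    rw [tailMax_mul_swap x σ (by omega) (by omega), tailMax_mul_swap x σ (by omega) (by omega)]
  have htel : ∀ σ, ∑ j ∈ range (n - 1), D j σ = tailMax x σ (n - 1) := fun σ => by
    rw [sum_range_sub (fun j => tailMax x σ j), tailMax_zero x hx, sub_zero]
  calc ∑ σ, tailMax x σ (n - 1) ^ 2
      ≤ ∑ σ, 2 * ∑ j ∈ range (n - 1), |prefixMean x σ (n - (j + 1))| * D j σ :=
        sum_le_sum fun σ _ => hpath σ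
    _ = 2 * ∑ j ∈ range (n - 1), ∑ σ, |prefixMean x σ (n - (j + 1))| * D j σ := by
        rw [← mul_sum, sum_comm]
    _ ≤ 2 * ∑ j ∈ range (n - 1), ∑ σ, |x (σ p)| * D j σ :=
        mul_le_mul_of_nonneg_left (sum_le_sum hstep) zero_le_two
    _ = 2 * ∑ σ, |x (σ p)| * tailMax x σ (n - 1) := by
        rw [sum_comm]
        simp only [← mul_sum, htel]

end PrefixMeans

theorem statement11 (n : ℕ) (hn : 1 ≤ n) (x : Fin n → ℝ) (hx : ∑ i, x i = 0) :
    (1 / (Nat.factorial n : ℝ)) * ∑ σ : Equiv.Perm (Fin n),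
        (Finset.Icc 1 n).sup' (Finset.nonempty_Icc.mpr hn)
          (fun k => ((1 / (k : ℝ)) *
            ∑ i ∈ Finset.univ.filter fun i : Fin n => (i : ℕ) < k, x (σ i)) ^ 2)
      ≤ (4 / (n : ℝ)) * ∑ i, (x i) ^ 2 := by
  set p : Fin n := ⟨0, hn⟩
  have hdoob := sum_sq_le_four_mul_of_sum_sq_le_two_mul_sum_mul univ (fun σ => |x (σ p)|)
    (fun σ => tailMax x σ (n - 1)) (sum_sq_tailMax_le x hx hn)
  have hcard := Perm.card_smul_sum_apply (fun i => x i ^ 2) p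
  simp only [sq_abs] at hdoob
  simp only [Fintype.card_fin, nsmul_eq_mul] at hcard
  calc _ ≤ 1 / (n ! : ℝ) * ∑ σ : Perm (Fin n), tailMax x σ (n - 1) ^ 2 := by
        gcongr with σ
        exact sup'_le _ _ fun k hk => sq_prefixMean_le_sq_tailMax x σ hk
    _ ≤ 1 / (n ! : ℝ) * (4 * ∑ σ : Perm (Fin n), x (σ p) ^ 2) := by gcongr
    _ = (4 / (n : ℝ)) * ∑ i, (x i) ^ 2 := by
        field_simp
        linarith
end
end

section
/- Let X_1,...,X_n be a uniformly random ordering of reals x_1,...,x_n with zero sum and B = sum x_i^2, let a_1,...,a_n be fixed reals, W_k = sum_{i=1}^k a_i X_i, S_k = X_1+...+X_k, alpha_1(k) = a_1+...+a_k, alpha_2(k) = a_1^2+...+a_k^2, and M_k = W_k + (alpha_1(k)/(n-k)) S_k. Then for 1 <= k <= n-1, E[M_k^2] = (alpha_2(k) B)/(n-1) + (alpha_1(k)^2 B)/((n-1)(n-k)). -/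
open MeasureTheory Finset

noncomputable section

/-!
With `w_i = a_i + α₁(k)/(n-k)` for `i < k` and `w_i = 0` otherwise, `M_k = ∑ w_i X_i`, so it
suffices to compute the second moment of a linear statistic of a uniform permutation. By
exchangeability `E[X_i²] = B/n`, and for `i ≠ j` summing `E[X_i X_j]` over `j ≠ i` gives
`-E[X_i²]` because `∑ x = 0`, so `E[X_i X_j] = -B/(n(n-1))`. Hence
`E[(∑ w_i X_i)²] = B/(n-1) · (∑ w_i² - (∑ w_i)²/n)`; here `∑ w_i = n α₁(k)/(n-k)`.
-/

instance (n : ℕ) : MeasurableSingletonClass (Equiv.Perm (Fin n)) := ⟨fun _ => trivial⟩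

section PermSums

variable {α : Type*} [Fintype α] [DecidableEq α]

lemma sum_perm_apply (g : α → ℝ) (i : α) :
    ∑ σ : Equiv.Perm α, g (σ i) = (Fintype.card α - 1).factorial * ∑ t, g t := by
  have hsame : ∀ j, ∑ σ : Equiv.Perm α, g (σ j) = ∑ σ : Equiv.Perm α, g (σ i) := fun j => by
    rw [← Equiv.sum_comp (Equiv.mulRight (Equiv.swap i j))]
    simp [Equiv.Perm.mul_apply]
  have hcard : 0 < Fintype.card α := Fintype.card_pos_iff.2 ⟨i⟩
  have htotal : (Fintype.card α : ℝ) * ∑ σ : Equiv.Perm α, g (σ i)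
      = (Fintype.card α).factorial * ∑ t, g t := by
    calc _ = ∑ j, ∑ σ : Equiv.Perm α, g (σ j) := by simp [hsame]
      _ = ∑ σ : Equiv.Perm α, ∑ t, g t := by
        rw [sum_comm]; simp only [Equiv.sum_comp]
      _ = _ := by simp [Fintype.card_perm]
  rw [← Nat.mul_factorial_pred hcard.ne', Nat.cast_mul, mul_assoc] at htotal
  exact mul_left_cancel₀ (by positivity) htotal

lemma sum_perm_apply_mul_apply_of_ne {x : α → ℝ} (hx : ∑ t, x t = 0) {i j : α} (hij : i ≠ j) :
    ∑ σ : Equiv.Perm α, x (σ i) * x (σ j)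
      = -((Fintype.card α - 2).factorial * ∑ t, x t ^ 2) := by
  have hsame : ∀ j' ∈ univ.erase i, ∑ σ : Equiv.Perm α, x (σ i) * x (σ j')
      = ∑ σ : Equiv.Perm α, x (σ i) * x (σ j) := fun j' hj' => by
    rw [← Equiv.sum_comp (Equiv.mulRight (Equiv.swap j j'))]
    have hi : Equiv.swap j j' i = i :=
      Equiv.swap_apply_of_ne_of_ne hij (ne_of_mem_erase hj').symm
    simp [Equiv.Perm.mul_apply, hi]
  have hrow : ∀ σ : Equiv.Perm α, ∑ j' ∈ univ.erase i, x (σ i) * x (σ j') = -x (σ i) ^ 2 :=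
    fun σ => by
      rw [← mul_sum, sum_erase_eq_sub (mem_univ _), Equiv.sum_comp σ x, hx]
      ring
  have hcard : 1 < Fintype.card α := Fintype.one_lt_card_iff.2 ⟨i, j, hij⟩
  have htotal : ((Fintype.card α - 1 : ℕ) : ℝ) * ∑ σ : Equiv.Perm α, x (σ i) * x (σ j)
      = -((Fintype.card α - 1).factorial * ∑ t, x t ^ 2) := by
    calc _ = ∑ j' ∈ univ.erase i, ∑ σ : Equiv.Perm α, x (σ i) * x (σ j') := by
          rw [sum_congr rfl hsame]
          simp [card_erase_of_mem]
      _ = -∑ σ : Equiv.Perm α, x (σ i) ^ 2 := by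
        rw [sum_comm]; simp [hrow]
      _ = _ := by rw [sum_perm_apply (fun t => x t ^ 2)]
  rw [← Nat.mul_factorial_pred (by omega : Fintype.card α - 1 ≠ 0), Nat.cast_mul, mul_assoc,
    ← mul_neg] at htotal
  exact mul_left_cancel₀ (by norm_cast; omega) htotal

lemma sum_perm_sq_sum_mul_apply {x : α → ℝ} (hx : ∑ t, x t = 0) (w : α → ℝ) :
    ∑ σ : Equiv.Perm α, (∑ i, w i * x (σ i)) ^ 2
      = ((Fintype.card α - 1).factorial * ∑ i, w i ^ 2
          - (Fintype.card α - 2).factorial * ((∑ i, w i) ^ 2 - ∑ i, w i ^ 2)) * ∑ t, x t ^ 2 := by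
  set D := (Fintype.card α - 1).factorial * ∑ t, x t ^ 2
  set E := -((Fintype.card α - 2).factorial * ∑ t, x t ^ 2)
  have hQ : ∀ i j, ∑ σ : Equiv.Perm α, x (σ i) * x (σ j) = E + if i = j then D - E else 0 := by
    intro i j
    by_cases hij : i = j
    · subst hij; simp [D, ← sq, sum_perm_apply (fun t => x t ^ 2)]
    · simp [hij, E, sum_perm_apply_mul_apply_of_ne hx hij]
  calc _ = ∑ i, ∑ j, w i * w j * ∑ σ : Equiv.Perm α, x (σ i) * x (σ j) := by
        simp_rw [sq, sum_mul_sum, mul_sum]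
        rw [sum_comm]
        refine sum_congr rfl fun i _ => ?_
        rw [sum_comm]
        exact sum_congr rfl fun j _ => sum_congr rfl fun σ _ => by ring
    _ = E * (∑ i, w i) ^ 2 + (D - E) * ∑ i, w i ^ 2 := by
        simp only [hQ, mul_add, sum_add_distrib, mul_ite, mul_zero, sum_ite_eq, mem_univ, if_true,
          ← sum_mul, ← mul_sum, sq]
        ring
    _ = _ := by ring

end PermSums

lemma integral_permMeasure_s16 {n : ℕ} (f : Equiv.Perm (Fin n) → ℝ) :
    ∫ σ, f σ ∂(permMeasure n) = (∑ σ, f σ) / n.factorial := by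
  simp [permMeasure, PMF.integral_eq_sum, Fintype.card_perm, ← mul_sum, div_eq_inv_mul]

lemma integral_sq_sum_mul_apply {n : ℕ} (hn : 2 ≤ n) {x : Fin n → ℝ} (hx : ∑ t, x t = 0)
    (w : Fin n → ℝ) :
    ∫ σ, (∑ i, w i * x (σ i)) ^ 2 ∂(permMeasure n)
      = (∑ i, w i ^ 2 - (∑ i, w i) ^ 2 / n) * (∑ t, x t ^ 2) / (n - 1) := by
  rw [integral_permMeasure_s16, sum_perm_sq_sum_mul_apply hx, Fintype.card_fin]
  obtain ⟨m, rfl⟩ : ∃ m, n = m + 2 := ⟨n - 2, by omega⟩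
  simp only [Nat.add_sub_cancel, show m + 2 - 1 = m + 1 by omega, Nat.factorial_succ]
  push_cast
  rw [show (m : ℝ) + 2 - 1 = m + 1 by ring]
  field_simp
  ring

lemma S_eq_sum_filter {n k : ℕ} (hk : k ≤ n) (x : Fin n → ℝ) (σ : Equiv.Perm (Fin n)) :
    S n x k σ = ∑ i ∈ univ.filter fun i : Fin n => (i : ℕ) < k, x (σ i) := by
  have hrange : range k = (univ.filter fun i : Fin n => (i : ℕ) < k).image Fin.val := by
    ext i
    simp only [mem_range, mem_image, mem_filter, mem_univ, true_and]
    exact ⟨fun hi => ⟨⟨i, by omega⟩, hi, rfl⟩, fun ⟨j, hj, hji⟩ => hji ▸ hj⟩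
  rw [S, hrange, sum_image fun i _ j _ h => Fin.val_injective h]
  exact sum_congr rfl fun i _ => dif_pos i.isLt

theorem statement16 (n : ℕ) (x : Fin n → ℝ) (B : ℝ)
    (hx : ∑ i, x i = 0) (hB : ∑ i, (x i) ^ 2 = B)
    (a : Fin n → ℝ) (k : ℕ) (hk1 : 1 ≤ k) (hk2 : k ≤ n - 1) :
    ∫ σ, ((∑ i ∈ Finset.univ.filter fun i : Fin n => (i : ℕ) < k, a i * x (σ i))
        + ((∑ i ∈ Finset.univ.filter fun i : Fin n => (i : ℕ) < k, a i) / ((n : ℝ) - k))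
          * S n x k σ) ^ 2 ∂(permMeasure n)
      = (∑ i ∈ Finset.univ.filter fun i : Fin n => (i : ℕ) < k, (a i) ^ 2) * B / ((n : ℝ) - 1)
        + (∑ i ∈ Finset.univ.filter fun i : Fin n => (i : ℕ) < k, a i) ^ 2 * B
            / (((n : ℝ) - 1) * ((n : ℝ) - k)) := by
  have hkn : k < n := by omega
  set t := univ.filter fun i : Fin n => (i : ℕ) < k
  have hcard : (#t : ℝ) = k := by simp [t, Fin.card_filter_val_lt, hkn.le]
  set c := (∑ i ∈ t, a i) / ((n : ℝ) - k) with hc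
  set w : Fin n → ℝ := fun i => if i ∈ t then a i + c else 0
  have hM : ∀ σ : Equiv.Perm (Fin n),
      (∑ i ∈ t, a i * x (σ i)) + c * S n x k σ = ∑ i, w i * x (σ i) := fun σ => by
    have hS : S n x k σ = ∑ i ∈ t, x (σ i) := S_eq_sum_filter hkn.le x σ
    simp [w, hS, ite_mul, mul_sum, ← sum_add_distrib, add_mul]
  have hw1 : ∑ i, w i = ∑ i ∈ t, a i + k * c := by
    simp [w, sum_add_distrib, hcard]
  have hw2 : ∑ i, w i ^ 2 = ∑ i ∈ t, a i ^ 2 + 2 * c * ∑ i ∈ t, a i + k * c ^ 2 := by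
    simp only [w, ite_pow, add_sq, ne_eq, OfNat.ofNat_ne_zero, not_false_eq_true, zero_pow,
      sum_ite_mem, univ_inter, sum_add_distrib, ← sum_mul, ← mul_sum, sum_const, nsmul_eq_mul,
      hcard]
    ring
  simp only [hM]
  rw [integral_sq_sum_mul_apply (by omega) hx, hw1, hw2, hB]
  have hkn' : (k : ℝ) < n := by exact_mod_cast hkn
  have hk1' : (1 : ℝ) ≤ k := by exact_mod_cast hk1
  have hn : (n : ℝ) ≠ 0 := by linarith
  have hn1 : (n : ℝ) - 1 ≠ 0 := by linarith
  have hnk : (n : ℝ) - k ≠ 0 := by linarith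
  rw [hc]
  field_simp
  ring

end
end

section
/- For real numbers x_1,...,x_n with x_1+...+x_n = 0, the average over all permutations sigma of max_{1<=k<=n} | sum_{i=1}^k (-1)^i x_{sigma(i)} |^2 is at most (17 + 16/17) sum_{i=1}^n x_i^2. -/
open MeasureTheory Finset

noncomputable section

/-! Write `A k` for the alternating partial sums. Transposing the samples in positions `2k` and
`2k + 1` is a bijection of the permutations that fixes `A j` for `j ≤ 2k` and flips the sign of
the increment `A (2k + 2) - A (2k)`. Hence `k ↦ A (2k)` is a martingale: its squares satisfy
`E A (2N) ^ 2 = ∑ E (A (2k + 2) - A (2k)) ^ 2 ≤ 2 ∑ xᵢ ^ 2`, and `k ↦ |A (2k)|` is a submartingale,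
so the pathwise Doob inequality gives `E (max_k |A (2k)|) ^ 2 ≤ 4 E A (2N) ^ 2 ≤ 8 ∑ xᵢ ^ 2`.
An odd partial sum is an even one minus a single sample `e`, and
`(M + e) ^ 2 ≤ 4 / 3 M ^ 2 + 4 e ^ 2`, so the average is at most `4 / 3 * 8 + 4 = 44 / 3`
times `∑ xᵢ ^ 2`. -/

open Equiv Finset
open scoped Nat

lemma X_mul_apply {n : ℕ} (x : Fin n → ℝ) {i : ℕ} (hi : i < n) (σ τ : Perm (Fin n)) :
    X n x i (σ * τ) = X n x (τ ⟨i, hi⟩) σ := by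
  simp [X, hi]

lemma X_sq_le_sum_sq {n : ℕ} (x : Fin n → ℝ) (i : ℕ) (σ : Perm (Fin n)) :
    X n x i σ ^ 2 ≤ ∑ j, x j ^ 2 := by
  unfold X
  split_ifs
  · exact single_le_sum (fun j _ => sq_nonneg (x j)) (mem_univ _)
  · simpa using sum_nonneg fun j _ => sq_nonneg (x j)

lemma T_le_sum_sq {n : ℕ} (x : Fin n → ℝ) {k : ℕ} (hk : k ≤ n) (σ : Perm (Fin n)) :
    T n x k σ ≤ ∑ j, x j ^ 2 :=
  calc T n x k σ ≤ ∑ i ∈ range n, X n x i σ ^ 2 :=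
        sum_le_sum_of_subset_of_nonneg (range_subset_range.mpr hk) fun _ _ _ => sq_nonneg _
    _ = ∑ i : Fin n, x (σ i) ^ 2 := by
        rw [← Fin.sum_univ_eq_sum_range (fun i => X n x i σ ^ 2)]
        simp [X]
    _ = ∑ j, x j ^ 2 := Equiv.sum_comp σ (fun j => x j ^ 2)

def altPartialSum (n : ℕ) (x : Fin n → ℝ) (k : ℕ) (σ : Perm (Fin n)) : ℝ :=
  ∑ i ∈ range k, (-1 : ℝ) ^ (i + 1) * X n x i σ

section AltPartialSum

variable {n : ℕ} (x : Fin n → ℝ)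

lemma sum_filter_lt_eq_altPartialSum {k : ℕ} (hk : k ≤ n) (σ : Perm (Fin n)) :
    ∑ i ∈ univ.filter (fun i : Fin n => (i : ℕ) < k), (-1 : ℝ) ^ ((i : ℕ) + 1) * x (σ i) =
      altPartialSum n x k σ := by
  have hX : ∀ i : Fin n, x (σ i) = X n x i σ := fun i => by simp [X]
  simp only [hX, sum_filter]
  rw [Fin.sum_univ_eq_sum_range (fun i => if i < k then (-1 : ℝ) ^ (i + 1) * X n x i σ else 0),
    ← sum_filter, altPartialSum]
  congr 1
  ext i
  simp only [mem_filter, mem_range]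
  omega

lemma altPartialSum_two_mul_add_one (k : ℕ) (σ : Perm (Fin n)) :
    altPartialSum n x (2 * k + 1) σ = altPartialSum n x (2 * k) σ - X n x (2 * k) σ := by
  simp [altPartialSum, sum_range_succ, pow_succ, pow_mul]
  ring

lemma altPartialSum_two_mul_succ (k : ℕ) (σ : Perm (Fin n)) :
    altPartialSum n x (2 * (k + 1)) σ =
      altPartialSum n x (2 * k) σ + (X n x (2 * k + 1) σ - X n x (2 * k) σ) := by
  rw [mul_add, mul_one, altPartialSum, sum_range_succ, sum_range_succ]
  simp [altPartialSum, pow_succ, pow_mul]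
  ring

def pairSwap (n k : ℕ) (hk : 2 * k + 1 < n) : Perm (Fin n) :=
  swap ⟨2 * k, by omega⟩ ⟨2 * k + 1, hk⟩

lemma altPartialSum_mul_pairSwap_of_le {k : ℕ} (hk : 2 * k + 1 < n) {j : ℕ} (hj : j ≤ 2 * k)
    (σ : Perm (Fin n)) :
    altPartialSum n x j (σ * pairSwap n k hk) = altPartialSum n x j σ := by
  refine sum_congr rfl fun i hi => ?_
  have hi : i < 2 * k := (mem_range.mp hi).trans_le hj
  rw [X_mul_apply x (by omega), pairSwap, swap_apply_of_ne_of_ne] <;> simp [Fin.ext_iff] <;> omega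

lemma altPartialSum_two_mul_succ_mul_pairSwap {k : ℕ} (hk : 2 * k + 1 < n) (σ : Perm (Fin n)) :
    altPartialSum n x (2 * (k + 1)) (σ * pairSwap n k hk) =
      altPartialSum n x (2 * k) σ - (X n x (2 * k + 1) σ - X n x (2 * k) σ) := by
  rw [altPartialSum_two_mul_succ, altPartialSum_mul_pairSwap_of_le x hk le_rfl,
    X_mul_apply x hk, X_mul_apply x (by omega), pairSwap, swap_apply_left, swap_apply_right]
  ring

end AltPartialSum

lemma two_mul_sum_eq_sum_add_mul_right {G : Type*} [Group G] [Fintype G] (f : G → ℝ) (τ : G) :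
    2 * ∑ σ, f σ = ∑ σ, (f σ + f (σ * τ)) := by
  rw [sum_add_distrib, Fintype.sum_equiv (Equiv.mulRight τ) (fun σ => f (σ * τ)) f fun _ => rfl]
  ring

section Variance

variable {n : ℕ} (x : Fin n → ℝ)

lemma sum_sq_altPartialSum_two_mul_succ {k : ℕ} (hk : 2 * k + 1 < n) :
    ∑ σ, altPartialSum n x (2 * (k + 1)) σ ^ 2 =
      ∑ σ, (altPartialSum n x (2 * k) σ ^ 2 +
        (X n x (2 * k + 1) σ - X n x (2 * k) σ) ^ 2) := by
  refine mul_left_cancel₀ (two_ne_zero (α := ℝ)) ?_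
  rw [two_mul_sum_eq_sum_add_mul_right _ (pairSwap n k hk), mul_sum]
  refine sum_congr rfl fun σ _ => ?_
  rw [altPartialSum_two_mul_succ, altPartialSum_two_mul_succ_mul_pairSwap x hk]
  ring

lemma sum_sq_altPartialSum_two_mul_le_two_mul_sum_T {k : ℕ} (hk : 2 * k ≤ n) :
    ∑ σ, altPartialSum n x (2 * k) σ ^ 2 ≤ 2 * ∑ σ, T n x (2 * k) σ := by
  induction k with
  | zero => simp [altPartialSum, T]
  | succ k ih =>
    have hT : ∀ σ, T n x (2 * (k + 1)) σ =
        T n x (2 * k) σ + (X n x (2 * k) σ ^ 2 + X n x (2 * k + 1) σ ^ 2) :=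
      fun σ => by rw [mul_add, mul_one, T, sum_range_succ, sum_range_succ, T]; ring
    calc ∑ σ, altPartialSum n x (2 * (k + 1)) σ ^ 2
        = ∑ σ, (altPartialSum n x (2 * k) σ ^ 2 +
            (X n x (2 * k + 1) σ - X n x (2 * k) σ) ^ 2) :=
          sum_sq_altPartialSum_two_mul_succ x (by omega)
      _ ≤ ∑ σ, altPartialSum n x (2 * k) σ ^ 2 +
            2 * ∑ σ, (X n x (2 * k) σ ^ 2 + X n x (2 * k + 1) σ ^ 2) := by
          rw [sum_add_distrib, mul_sum]
          gcongr with σ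
          nlinarith [sq_nonneg (X n x (2 * k + 1) σ + X n x (2 * k) σ)]
      _ ≤ 2 * ∑ σ, T n x (2 * (k + 1)) σ := by
          simp only [hT, sum_add_distrib]
          linarith [ih (by omega)]

lemma sum_sq_altPartialSum_two_mul_le {k : ℕ} (hk : 2 * k ≤ n) :
    ∑ σ, altPartialSum n x (2 * k) σ ^ 2 ≤ 2 * n ! * ∑ j, x j ^ 2 :=
  calc ∑ σ, altPartialSum n x (2 * k) σ ^ 2 ≤ 2 * ∑ σ, T n x (2 * k) σ :=
        sum_sq_altPartialSum_two_mul_le_two_mul_sum_T x hk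
    _ ≤ 2 * ∑ _σ : Perm (Fin n), ∑ j, x j ^ 2 := by
        gcongr with σ; exact T_le_sum_sq x hk σ
    _ = 2 * n ! * ∑ j, x j ^ 2 := by
        rw [sum_const, card_univ, Fintype.card_perm, Fintype.card_fin, nsmul_eq_mul, mul_assoc]

end Variance

lemma four_mul_sum_partialSups_mul_sub_le (b : ℕ → ℝ) (N : ℕ) :
    4 * ∑ k ∈ range N, partialSups b k * (b (k + 1) - b k) ≤
      4 * partialSups b N * b N - 2 * partialSups b N ^ 2 - 2 * b 0 ^ 2 := by
  induction N with
  | zero => simp only [sum_range_zero, partialSups_zero]; nlinarith [sq_nonneg (b 0)]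
  | succ N ih =>
    have hsucc : partialSups b (N + 1) = max (partialSups b N) (b (N + 1)) :=
      partialSups_succ b N
    rw [sum_range_succ, hsucc]
    rcases max_cases (partialSups b N) (b (N + 1)) with ⟨h, _⟩ | ⟨h, _⟩ <;> rw [h]
    · nlinarith
    · nlinarith [sq_nonneg (b (N + 1) - partialSups b N)]

-- Pathwise Doob L² inequality: when `b` is a submartingale, the sum has nonnegative expectation.
lemma sq_partialSups_le (b : ℕ → ℝ) (N : ℕ) :
    partialSups b N ^ 2 ≤ 4 * b N ^ 2 - 4 * ∑ k ∈ range N, partialSups b k * (b (k + 1) - b k) := by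
  nlinarith [four_mul_sum_partialSups_mul_sub_le b N, sq_nonneg (2 * b N - partialSups b N),
    sq_nonneg (b 0)]

section Maximal

variable {n : ℕ} (x : Fin n → ℝ)

lemma partialSups_abs_altPartialSum_mul_pairSwap {k : ℕ} (hk : 2 * k + 1 < n) (σ : Perm (Fin n)) :
    partialSups (fun j => |altPartialSum n x (2 * j) (σ * pairSwap n k hk)|) k =
      partialSups (fun j => |altPartialSum n x (2 * j) σ|) k := by
  simp only [partialSups_apply]
  refine sup'_congr _ rfl fun j hj => ?_
  rw [altPartialSum_mul_pairSwap_of_le x hk (by simp at hj; omega)]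

lemma sum_partialSups_mul_abs_altPartialSum_sub_nonneg {k : ℕ} (hk : 2 * k + 1 < n) :
    0 ≤ ∑ σ, partialSups (fun j => |altPartialSum n x (2 * j) σ|) k *
      (|altPartialSum n x (2 * (k + 1)) σ| - |altPartialSum n x (2 * k) σ|) := by
  refine nonneg_of_mul_nonneg_right ?_ (two_pos (α := ℝ))
  rw [two_mul_sum_eq_sum_add_mul_right _ (pairSwap n k hk)]
  refine sum_nonneg fun σ _ => ?_
  rw [partialSups_abs_altPartialSum_mul_pairSwap x hk, altPartialSum_two_mul_succ_mul_pairSwap x hk,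
    altPartialSum_mul_pairSwap_of_le x hk le_rfl, altPartialSum_two_mul_succ, ← mul_add]
  set a := altPartialSum n x (2 * k) σ
  set d := X n x (2 * k + 1) σ - X n x (2 * k) σ
  have hM : 0 ≤ partialSups (fun j => |altPartialSum n x (2 * j) σ|) k :=
    (abs_nonneg _).trans
      (le_partialSups_of_le (fun j => |altPartialSum n x (2 * j) σ|) (Nat.zero_le k))
  have htri : |2 * a| ≤ |a + d| + |a - d| := by
    simpa [two_mul] using abs_add_le (a + d) (a - d)
  rw [abs_mul, abs_two] at htri
  exact mul_nonneg hM (by linarith)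

lemma sum_sq_partialSups_abs_altPartialSum_le {N : ℕ} (hN : 2 * N ≤ n) :
    ∑ σ, partialSups (fun j => |altPartialSum n x (2 * j) σ|) N ^ 2 ≤ 8 * n ! * ∑ j, x j ^ 2 :=
  calc ∑ σ, partialSups (fun j => |altPartialSum n x (2 * j) σ|) N ^ 2
      ≤ ∑ σ, (4 * altPartialSum n x (2 * N) σ ^ 2 - 4 * ∑ k ∈ range N,
          partialSups (fun j => |altPartialSum n x (2 * j) σ|) k *
            (|altPartialSum n x (2 * (k + 1)) σ| - |altPartialSum n x (2 * k) σ|)) := by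
        gcongr with σ
        simpa only [sq_abs] using sq_partialSups_le (fun j => |altPartialSum n x (2 * j) σ|) N
    _ = 4 * ∑ σ, altPartialSum n x (2 * N) σ ^ 2 - 4 * ∑ k ∈ range N, ∑ σ,
          partialSups (fun j => |altPartialSum n x (2 * j) σ|) k *
            (|altPartialSum n x (2 * (k + 1)) σ| - |altPartialSum n x (2 * k) σ|) := by
        rw [sum_sub_distrib, ← mul_sum, ← mul_sum, sum_comm]
    _ ≤ 4 * ∑ σ, altPartialSum n x (2 * N) σ ^ 2 := by
        have := sum_nonneg fun k (hk : k ∈ range N) =>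
          sum_partialSups_mul_abs_altPartialSum_sub_nonneg x (k := k) (by simp at hk; omega)
        linarith
    _ ≤ 8 * n ! * ∑ j, x j ^ 2 := by
        linarith [sum_sq_altPartialSum_two_mul_le x hN]

lemma sq_abs_altPartialSum_le {k : ℕ} (hk : k ≤ n) (σ : Perm (Fin n)) :
    |altPartialSum n x k σ| ^ 2 ≤
      4 / 3 * partialSups (fun j => |altPartialSum n x (2 * j) σ|) (n / 2) ^ 2 +
        4 * ∑ j, x j ^ 2 := by
  set M := partialSups (fun j => |altPartialSum n x (2 * j) σ|) (n / 2)
  have hle : ∀ j, 2 * j ≤ n → |altPartialSum n x (2 * j) σ| ≤ M := fun j hj =>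
    le_partialSups_of_le (fun j => |altPartialSum n x (2 * j) σ|) (by omega)
  have hs : 0 ≤ ∑ j, x j ^ 2 := sum_nonneg fun j _ => sq_nonneg (x j)
  obtain ⟨j, rfl | rfl⟩ := Nat.even_or_odd' k
  · have := hle j hk
    nlinarith [abs_nonneg (altPartialSum n x (2 * j) σ)]
  · have hA := hle j (by omega)
    have hX := X_sq_le_sum_sq x (2 * j) σ
    have hodd : |altPartialSum n x (2 * j + 1) σ| ≤ M + |X n x (2 * j) σ| := by
      rw [altPartialSum_two_mul_add_one]
      linarith [abs_sub (altPartialSum n x (2 * j) σ) (X n x (2 * j) σ)]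
    -- `(M + e) ^ 2 ≤ 4 / 3 * M ^ 2 + 4 * e ^ 2` is `0 ≤ (M - 3 * e) ^ 2 / 3`
    nlinarith [abs_nonneg (altPartialSum n x (2 * j + 1) σ), abs_nonneg (X n x (2 * j) σ),
      sq_abs (X n x (2 * j) σ), sq_nonneg (M - 3 * |X n x (2 * j) σ|), (abs_nonneg _).trans hA]

end Maximal

theorem statement18_general (n : ℕ) (hn : 1 ≤ n) (x : Fin n → ℝ) :
    (1 / (Nat.factorial n : ℝ)) * ∑ σ : Equiv.Perm (Fin n),
        (Finset.Icc 1 n).sup' (Finset.nonempty_Icc.mpr hn)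
          (fun k =>
            |∑ i ∈ Finset.univ.filter fun i : Fin n => (i : ℕ) < k,
              (-1 : ℝ) ^ ((i : ℕ) + 1) * x (σ i)| ^ 2)
      ≤ (17 + 16 / 17) * ∑ i, (x i) ^ 2 := by
  set s := ∑ i, x i ^ 2
  set M := fun σ => partialSups (fun j => |altPartialSum n x (2 * j) σ|) (n / 2)
  have hM : ∑ σ, M σ ^ 2 ≤ 8 * n ! * s :=
    sum_sq_partialSups_abs_altPartialSum_le x (Nat.mul_div_le n 2)
  have hs : 0 ≤ s := sum_nonneg fun i _ => sq_nonneg (x i)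
  calc _ ≤ 1 / (n ! : ℝ) * ∑ σ, (4 / 3 * M σ ^ 2 + 4 * s) := by
        gcongr with σ
        refine sup'_le _ _ fun k hk => ?_
        rw [sum_filter_lt_eq_altPartialSum x (mem_Icc.mp hk).2]
        exact sq_abs_altPartialSum_le x (mem_Icc.mp hk).2 σ
    _ = 1 / (n ! : ℝ) * (4 / 3 * ∑ σ, M σ ^ 2 + n ! * (4 * s)) := by
        rw [sum_add_distrib, ← mul_sum, sum_const, card_univ, Fintype.card_perm,
          Fintype.card_fin, nsmul_eq_mul]
    _ ≤ 1 / (n ! : ℝ) * (4 / 3 * (8 * n ! * s) + n ! * (4 * s)) := by gcongr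
    _ = 44 / 3 * s := by field_simp; ring
    _ ≤ (17 + 16 / 17) * s := by linarith

theorem statement18 (n : ℕ) (hn : 1 ≤ n) (x : Fin n → ℝ) (hx : ∑ i, x i = 0) :
    (1 / (Nat.factorial n : ℝ)) * ∑ σ : Equiv.Perm (Fin n),
        (Finset.Icc 1 n).sup' (Finset.nonempty_Icc.mpr hn)
          (fun k =>
            |∑ i ∈ Finset.univ.filter fun i : Fin n => (i : ℕ) < k,
              (-1 : ℝ) ^ ((i : ℕ) + 1) * x (σ i)| ^ 2)
      ≤ (17 + 16 / 17) * ∑ i, (x i) ^ 2 :=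
  statement18_general n hn x

end
end
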